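/- Let T > 0, τ ∈ (0, T), A > 0, α > 0, B > 0, and suppose y : [0, T) → [0, ∞) is absolutely continuous with y'(t) + A·y(t)^α ≤ h(t) for almost every t ∈ (0, T), where h ∈ L¹_loc([0, T)) is nonnegative and satisfies ∫_t^{t+τ} h(s) ds ≤ B for all t ∈ (0, T − τ). Then y(t) ≤ max{ y(0) + B, (1/τ^{1/α})·(B/A)^{1/α} + 2B } for all t ∈ (0, T). -/

import Mathlib

/-!
Let `M = (B / (A τ))^(1/α)`, the level at which the dissipation `A y^α` equals the average
rate `B / τ` of the forcing. On any interval `[a, b]` on which `y ≥ M`, the inequality gives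
`y b - y a ≤ ∫_a^b h - (b - a) B / τ`, and covering `[a, b]` by `⌊(b - a)/τ⌋ + 1` windows of
length `τ` gives `∫_a^b h ≤ (b - a) B / τ + B`; so `y` grows by at most `B` there. Taking `a`
to be the last time before `t` at which `y ≤ M` (or `a = 0` if there is none) bounds `y t`
by `M + B` (or `y 0 + B`).
-/

open MeasureTheory Set Filter Topology

section WindowedIntegrals

variable {h : ℝ → ℝ} {T τ B : ℝ}

lemma intervalIntegrable_of_forall_Ico {f : ℝ → ℝ}
    (hf : ∀ t ∈ Ico (0 : ℝ) T, IntervalIntegrable f volume 0 t) {a b : ℝ}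
    (ha : a ∈ Ico 0 T) (hb : b ∈ Ico 0 T) : IntervalIntegrable f volume a b :=
  (hf a ha).symm.trans (hf b hb)

lemma integral_le_integral_of_subinterval (hh_nonneg : ∀ t ∈ Ico (0 : ℝ) T, 0 ≤ h t)
    (hh_int : ∀ t ∈ Ico (0 : ℝ) T, IntervalIntegrable h volume 0 t) {a b c d : ℝ}
    (hc : 0 ≤ c) (hca : c ≤ a) (hab : a ≤ b) (hbd : b ≤ d) (hd : d < T) :
    ∫ s in a..b, h s ≤ ∫ s in c..d, h s :=
  intervalIntegral.integral_mono_interval hca hab hbd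
    (ae_restrict_of_forall_mem measurableSet_Ioc fun _ hx =>
      hh_nonneg _ ⟨hc.trans hx.1.le, hx.2.trans_lt hd⟩)
    (intervalIntegrable_of_forall_Ico hh_int ⟨hc, by linarith⟩ ⟨by linarith, hd⟩)

/-- The window bound is only assumed for windows starting in the open interval `(0, T - τ)`;
it extends to the window `[0, τ]` since `∫_0^ε h → 0`. -/
lemma integral_zero_le_of_window_bound (hτ : 0 < τ) (hτT : τ < T)
    (hh_nonneg : ∀ t ∈ Ico (0 : ℝ) T, 0 ≤ h t)
    (hh_int : ∀ t ∈ Ico (0 : ℝ) T, IntervalIntegrable h volume 0 t)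
    (hh_bd : ∀ t ∈ Ioo (0 : ℝ) (T - τ), (∫ s in t..t + τ, h s) ≤ B) :
    ∫ s in (0 : ℝ)..τ, h s ≤ B := by
  have hprim : Tendsto (fun ε => ∫ s in (0 : ℝ)..ε, h s) (𝓝[>] 0) (𝓝 0) := by
    have hcont := intervalIntegral.continuousOn_primitive_interval'
      (hh_int τ ⟨hτ.le, hτT⟩) left_mem_uIcc 0 left_mem_uIcc
    rw [uIcc_of_le hτ.le] at hcont
    simpa using (hcont.mono_of_mem_nhdsWithin (Icc_mem_nhdsGT hτ)).tendsto
  refine le_of_le_of_eq (ge_of_tendsto (hprim.const_add B) ?_) (add_zero B)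
  filter_upwards [Ioo_mem_nhdsGT (sub_pos.2 hτT)] with ε ⟨hε0, hεT⟩
  have hii := intervalIntegrable_of_forall_Ico hh_int (a := ε) (b := ε + τ)
    ⟨hε0.le, by linarith⟩ ⟨by linarith, by linarith⟩
  calc ∫ s in (0 : ℝ)..τ, h s
      ≤ ∫ s in (0 : ℝ)..ε + τ, h s :=
        integral_le_integral_of_subinterval hh_nonneg hh_int le_rfl le_rfl hτ.le
          (by linarith) (by linarith)
    _ = (∫ s in (0 : ℝ)..ε, h s) + ∫ s in ε..ε + τ, h s :=
        (intervalIntegral.integral_add_adjacent_intervals (hh_int ε ⟨hε0.le, by linarith⟩)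
          hii).symm
    _ ≤ B + ∫ s in (0 : ℝ)..ε, h s := by linarith [hh_bd ε ⟨hε0, hεT⟩]

lemma integral_le_of_length_le (hτ : 0 < τ) (hτT : τ < T)
    (hh_nonneg : ∀ t ∈ Ico (0 : ℝ) T, 0 ≤ h t)
    (hh_int : ∀ t ∈ Ico (0 : ℝ) T, IntervalIntegrable h volume 0 t)
    (hh_bd : ∀ t ∈ Ioo (0 : ℝ) (T - τ), (∫ s in t..t + τ, h s) ≤ B) {a b : ℝ}
    (ha : 0 ≤ a) (hab : a ≤ b) (hb : b < T) (hlen : b - a ≤ τ) :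
    ∫ s in a..b, h s ≤ B := by
  rcases le_or_gt b τ with hbτ | hτb
  · exact (integral_le_integral_of_subinterval hh_nonneg hh_int le_rfl ha hab hbτ hτT).trans
      (integral_zero_le_of_window_bound hτ hτT hh_nonneg hh_int hh_bd)
  · have hwindow := hh_bd (b - τ) ⟨by linarith, by linarith⟩
    rw [sub_add_cancel] at hwindow
    exact (integral_le_integral_of_subinterval hh_nonneg hh_int (by linarith) (by linarith)
      hab le_rfl hb).trans hwindow

lemma integral_le_nat_mul_add (hB : 0 ≤ B) (hτ : 0 < τ) (hτT : τ < T)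
    (hh_nonneg : ∀ t ∈ Ico (0 : ℝ) T, 0 ≤ h t)
    (hh_int : ∀ t ∈ Ico (0 : ℝ) T, IntervalIntegrable h volume 0 t)
    (hh_bd : ∀ t ∈ Ioo (0 : ℝ) (T - τ), (∫ s in t..t + τ, h s) ≤ B) (n : ℕ) {a b : ℝ}
    (ha : 0 ≤ a) (hab : a ≤ b) (hb : b < T) (hlen : b - a ≤ n * τ + τ) :
    ∫ s in a..b, h s ≤ n * B + B := by
  induction n generalizing a with
  | zero =>
    simpa using integral_le_of_length_le hτ hτT hh_nonneg hh_int hh_bd ha hab hb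
      (by simpa using hlen)
  | succ n ih =>
    have hnB : 0 ≤ ((n + 1 : ℕ) : ℝ) * B := by positivity
    rcases le_or_gt (b - a) τ with hshort | hlong
    · linarith [integral_le_of_length_le hτ hτT hh_nonneg hh_int hh_bd ha hab hb hshort]
    · have hfirst := integral_le_of_length_le hτ hτT hh_nonneg hh_int hh_bd (b := a + τ) ha
        (by linarith) (by linarith) (by linarith)
      have hrest := ih (a := a + τ) (by linarith) (by linarith) (by push_cast at hlen; linarith)
      rw [← intervalIntegral.integral_add_adjacent_intervals
        (intervalIntegrable_of_forall_Ico hh_int (a := a) (b := a + τ) ⟨ha, by linarith⟩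
          ⟨by linarith, by linarith⟩)
        (intervalIntegrable_of_forall_Ico hh_int (b := b) ⟨by linarith, by linarith⟩
          ⟨by linarith, hb⟩)]
      push_cast
      linarith

lemma integral_le_div_mul_add (hB : 0 ≤ B) (hτ : 0 < τ) (hτT : τ < T)
    (hh_nonneg : ∀ t ∈ Ico (0 : ℝ) T, 0 ≤ h t)
    (hh_int : ∀ t ∈ Ico (0 : ℝ) T, IntervalIntegrable h volume 0 t)
    (hh_bd : ∀ t ∈ Ioo (0 : ℝ) (T - τ), (∫ s in t..t + τ, h s) ≤ B) {a b : ℝ}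
    (ha : 0 ≤ a) (hab : a ≤ b) (hb : b < T) :
    ∫ s in a..b, h s ≤ (b - a) / τ * B + B := by
  set n := ⌊(b - a) / τ⌋₊
  have hn : (n : ℝ) ≤ (b - a) / τ := Nat.floor_le (div_nonneg (sub_nonneg.2 hab) hτ.le)
  have hlen : b - a ≤ n * τ + τ := by
    have := Nat.lt_floor_add_one ((b - a) / τ)
    rw [div_lt_iff₀ hτ] at this
    linarith
  calc ∫ s in a..b, h s ≤ n * B + B :=
        integral_le_nat_mul_add hB hτ hτT hh_nonneg hh_int hh_bd n ha hab hb hlen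
    _ ≤ (b - a) / τ * B + B := by gcongr

end WindowedIntegrals

section Solution

variable {y g h : ℝ → ℝ} {T : ℝ}

lemma continuousOn_Icc_of_eq_add_integral
    (hg_int : ∀ t ∈ Ico (0 : ℝ) T, IntervalIntegrable g volume 0 t)
    (hy_AC : ∀ t ∈ Ico (0 : ℝ) T, y t = y 0 + ∫ s in (0 : ℝ)..t, g s) {t : ℝ}
    (ht : t ∈ Ico 0 T) : ContinuousOn y (Icc 0 t) := by
  have hprim := intervalIntegral.continuousOn_primitive_interval' (hg_int t ht) left_mem_uIcc
  rw [uIcc_of_le ht.1] at hprim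
  exact (continuousOn_const.add hprim).congr fun u hu => hy_AC u ⟨hu.1, hu.2.trans_lt ht.2⟩

lemma sub_le_integral_sub_of_le_on_Ioc {A α M : ℝ} (hA : 0 ≤ A) (hα : 0 ≤ α) (hM : 0 ≤ M)
    (hg_int : ∀ t ∈ Ico (0 : ℝ) T, IntervalIntegrable g volume 0 t)
    (hy_AC : ∀ t ∈ Ico (0 : ℝ) T, y t = y 0 + ∫ s in (0 : ℝ)..t, g s)
    (hineq : ∀ᵐ t ∂volume, t ∈ Ioo (0 : ℝ) T → g t + A * y t ^ α ≤ h t)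
    (hh_int : ∀ t ∈ Ico (0 : ℝ) T, IntervalIntegrable h volume 0 t) {a b : ℝ}
    (ha : 0 ≤ a) (hab : a ≤ b) (hb : b < T) (hMy : ∀ u ∈ Ioc a b, M ≤ y u) :
    y b - y a ≤ (∫ s in a..b, h s) - (b - a) * (A * M ^ α) := by
  have haT : a ∈ Ico 0 T := ⟨ha, by linarith⟩
  have hbT : b ∈ Ico 0 T := ⟨ha.trans hab, hb⟩
  have hhi := intervalIntegrable_of_forall_Ico hh_int haT hbT
  rw [hy_AC b hbT, hy_AC a haT, add_sub_add_left_eq_sub,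
    intervalIntegral.integral_interval_sub_left (hg_int b hbT) (hg_int a haT), ← smul_eq_mul,
    ← intervalIntegral.integral_const, ← intervalIntegral.integral_sub hhi
      intervalIntegrable_const]
  refine intervalIntegral.integral_mono_ae_restrict hab
    (intervalIntegrable_of_forall_Ico hg_int haT hbT) (hhi.sub intervalIntegrable_const) ?_
  rw [← Measure.restrict_congr_set Ioc_ae_eq_Icc]
  filter_upwards [ae_restrict_mem measurableSet_Ioc, ae_restrict_of_ae hineq] with u hu hineq_u
  have hdiss : A * M ^ α ≤ A * y u ^ α :=
    mul_le_mul_of_nonneg_left (Real.rpow_le_rpow hM (hMy u hu) hα) hA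
  linarith [hineq_u ⟨ha.trans_lt hu.1, hu.2.trans_lt hb⟩]

end Solution

lemma exists_last_le_of_continuousOn {y : ℝ → ℝ} {a t M : ℝ} (hy : ContinuousOn y (Icc a t))
    (hex : ∃ u ∈ Icc a t, y u ≤ M) : ∃ s ∈ Icc a t, y s ≤ M ∧ ∀ u ∈ Ioc s t, M < y u := by
  set S := Icc a t ∩ y ⁻¹' Iic M
  have hbdd : BddAbove S := ⟨t, fun u hu => hu.1.2⟩
  obtain ⟨hs, hys⟩ : sSup S ∈ S :=
    (hy.preimage_isClosed_of_isClosed isClosed_Icc isClosed_Iic).csSup_mem hex hbdd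
  refine ⟨sSup S, hs, hys, fun u hu => ?_⟩
  by_contra! hyu
  exact (le_csSup hbdd ⟨⟨hs.1.trans hu.1.le, hu.2⟩, hyu⟩).not_gt hu.1

lemma mul_rpow_level_eq {A B τ α : ℝ} (hA : 0 < A) (hB : 0 ≤ B) (hτ : 0 < τ) (hα : α ≠ 0) :
    A * (1 / τ ^ (1 / α) * (B / A) ^ (1 / α)) ^ α = B / τ := by
  have hBA : 0 ≤ B / A := div_nonneg hB hA.le
  rw [one_div_mul_eq_div, ← Real.div_rpow hBA hτ.le, one_div,
    Real.rpow_inv_rpow (div_nonneg hBA hτ.le) hα]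
  field_simp

theorem stmt_0_general (T τ A α B : ℝ) (hτ : τ ∈ Ioo 0 T)
    (hA : 0 < A) (hα : 0 < α) (hB : 0 < B)
    (y g h : ℝ → ℝ)
    (hg_int : ∀ t ∈ Ico (0 : ℝ) T, IntervalIntegrable g volume 0 t)
    (hy_AC : ∀ t ∈ Ico (0 : ℝ) T, y t = y 0 + ∫ s in (0 : ℝ)..t, g s)
    (hineq : ∀ᵐ t ∂volume, t ∈ Ioo (0 : ℝ) T → g t + A * y t ^ α ≤ h t)
    (hh_nonneg : ∀ t ∈ Ico (0 : ℝ) T, 0 ≤ h t)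
    (hh_int : ∀ t ∈ Ico (0 : ℝ) T, IntervalIntegrable h volume 0 t)
    (hh_bd : ∀ t ∈ Ioo (0 : ℝ) (T - τ), (∫ s in t..t + τ, h s) ≤ B) :
    ∀ t ∈ Ioo (0 : ℝ) T,
      y t ≤ max (y 0 + B) (1 / τ ^ (1 / α) * (B / A) ^ (1 / α) + 2 * B) := by
  obtain ⟨hτ0, hτT⟩ := hτ
  set M := 1 / τ ^ (1 / α) * (B / A) ^ (1 / α)
  have hM : 0 ≤ M := by positivity
  have hMα : A * M ^ α = B / τ := mul_rpow_level_eq hA hB.le hτ0 hα.ne'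
  have hgrowth : ∀ a b, 0 ≤ a → a ≤ b → b < T → (∀ u ∈ Ioc a b, M ≤ y u) → y b ≤ y a + B := by
    intro a b ha hab hb hMy
    have hdiss := sub_le_integral_sub_of_le_on_Ioc hA.le hα.le hM hg_int hy_AC hineq hh_int
      ha hab hb hMy
    have hforcing := integral_le_div_mul_add hB.le hτ0 hτT hh_nonneg hh_int hh_bd ha hab hb
    rw [hMα] at hdiss
    linarith [div_mul_eq_mul_div (b - a) τ B, mul_div_assoc (b - a) B τ]
  rintro t ⟨ht0, htT⟩
  by_cases hex : ∃ u ∈ Icc 0 t, y u ≤ M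
  · obtain ⟨s, hs, hys, hMy⟩ := exists_last_le_of_continuousOn
      (continuousOn_Icc_of_eq_add_integral hg_int hy_AC ⟨ht0.le, htT⟩) hex
    have := hgrowth s t hs.1 hs.2 htT fun u hu => (hMy u hu).le
    exact le_max_of_le_right (by linarith)
  · push Not at hex
    exact le_max_of_le_left
      (hgrowth 0 t le_rfl ht0.le htT fun u hu => (hex u (Ioc_subset_Icc_self hu)).le)

/-- Lemma 2.2 of the paper: a boundedness statement for an absolutely continuous
function `y` satisfying `y' + A y^α ≤ h` a.e., where `h` has uniformly bounded
integrals over intervals of length `τ`.  Absolute continuity of `y` with a.e.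
derivative `g` is encoded by the integral representation `y t = y 0 + ∫₀^t g`. -/
theorem stmt_0 (T τ A α B : ℝ) (hT : 0 < T) (hτ : τ ∈ Ioo 0 T)
    (hA : 0 < A) (hα : 0 < α) (hB : 0 < B)
    (y g h : ℝ → ℝ)
    (hy_nonneg : ∀ t ∈ Ico (0 : ℝ) T, 0 ≤ y t)
    (hg_int : ∀ t ∈ Ico (0 : ℝ) T, IntervalIntegrable g volume 0 t)
    (hy_AC : ∀ t ∈ Ico (0 : ℝ) T, y t = y 0 + ∫ s in (0 : ℝ)..t, g s)
    (hineq : ∀ᵐ t ∂volume, t ∈ Ioo (0 : ℝ) T → g t + A * y t ^ α ≤ h t)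
    (hh_nonneg : ∀ t ∈ Ico (0 : ℝ) T, 0 ≤ h t)
    (hh_int : ∀ t ∈ Ico (0 : ℝ) T, IntervalIntegrable h volume 0 t)
    (hh_bd : ∀ t ∈ Ioo (0 : ℝ) (T - τ), (∫ s in t..t + τ, h s) ≤ B) :
    ∀ t ∈ Ioo (0 : ℝ) T,
      y t ≤ max (y 0 + B) (1 / τ ^ (1 / α) * (B / A) ^ (1 / α) + 2 * B) :=
  stmt_0_general T τ A α B hτ hA hα hB y g h hg_int hy_AC hineq hh_nonneg hh_int hh_bd
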